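/- arXiv:2501.04720 — 3 statements merged into one kernel-verified Lean document; each statement's English description precedes it below -/
import Mathlib

section
/- Let R be a semi-potent ring. The following are equivalent: (i) R is a ΔU ring; (ii) x - x² ∈ J(R) for every x ∈ R (i.e., R/J(R) is Boolean); (iii) R is a UJ ring; (iv) for every unit u of R there exists n ≥ 1 with (u - 1)ⁿ ∈ J(R) (i.e., R/J(R) is a UU ring). -/
/-!
Everything is pushed to `T = R ⧸ J(R)`. Units lift modulo the Jacobson radical, so the ΔU and UU
conditions pass to `T`, and `T` is semipotent with `J(T) = 0`: every nonzero principal right ideal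
of `T` contains a nonzero idempotent. Under either condition `T` contains no pair `a, b` with
`a² = b² = 0`, `aba = a`, `bab = b` (a copy of the matrix units of `M₂`), hence no nonzero
square-zero element, so all idempotents of `T` are central. If `x ≠ x²` in `T`, a nonzero
idempotent `e ∈ (x - x²)T` makes `y = e x` and `e - y` invertible in the corner `eT`, so
`y + (1 - e)` and `1 - y` are units of `T`, and `e` is the sum of `-(y - e)` and `y`. These lie in
`Δ(T)`, resp. are commuting nilpotents, which forces `e = 0`. Thus `T` is Boolean, which is (ii);
the rest is direct, using `J(R) ⊆ Δ(R)`.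
-/

/-- `Δ(R) = {r ∈ R : r + u is a unit for every unit u of R}`. -/
def Delta (R : Type*) [Ring R] : Set R := {r : R | ∀ u : Rˣ, IsUnit (r + (u : R))}

/-- A ring `R` is a ΔU ring if every unit `u` satisfies `u - 1 ∈ Δ(R)`. -/
def IsDeltaU (R : Type*) [Ring R] : Prop := ∀ u : Rˣ, (u : R) - 1 ∈ Delta R

def IsSemipotent (R : Type*) [Ring R] : Prop :=
  ∀ a : R, a ∉ Ring.jacobson R → ∃ e : R, e ≠ 0 ∧ IsIdempotentElem e ∧ ∃ r : R, e = a * r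

def IsUU (R : Type*) [Ring R] : Prop := ∀ u : Rˣ, IsNilpotent ((u : R) - 1)

/-- Ring-theoretic usage: every idempotent is central (not "commutative"). -/
def IsAbelianRing (R : Type*) [Ring R] : Prop :=
  ∀ e : R, IsIdempotentElem e → ∀ r : R, Commute e r

/-- `a`, `b` behave like the matrix units `e₁₂`, `e₂₁`, and `a * b + b * a` like the identity
of `M₂`. -/
structure IsMatrixUnitPair {R : Type*} [Ring R] (a b : R) : Prop where
  mul_self_left : a * a = 0
  mul_self_right : b * b = 0
  mul_mul_left : a * b * a = a
  mul_mul_right : b * a * b = b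

section

variable {R : Type*} [Ring R] {a b : R}

theorem exists_mul_one_add_eq_one_of_mem_jacobson {w : R} (hw : w ∈ Ring.jacobson R) :
    ∃ z, z * (1 + w) = 1 := by
  rw [← Ideal.jacobson_bot] at hw
  obtain ⟨z, hz⟩ := Ideal.mem_jacobson_iff.1 hw 1
  rw [Submodule.mem_bot] at hz
  exact ⟨z, by linear_combination (norm := noncomm_ring) hz⟩

theorem isUnit_one_add_of_mem_jacobson {w : R} (hw : w ∈ Ring.jacobson R) : IsUnit (1 + w) := by
  -- `z` inverts `1 + w` on the left, and `z = 1 - z w` is itself left invertible.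
  obtain ⟨z, hz⟩ := exists_mul_one_add_eq_one_of_mem_jacobson hw
  obtain ⟨z', hz'⟩ := exists_mul_one_add_eq_one_of_mem_jacobson
    (neg_mem (Ideal.mul_mem_left _ z hw))
  have hz'z : z' * z = 1 := by linear_combination (norm := noncomm_ring) hz' + z' * hz
  have hz'_eq : z' = 1 + w := by linear_combination (norm := noncomm_ring) hz'z * (1 + w) - z' * hz
  exact isUnit_iff_exists.2 ⟨z, by rw [← hz'_eq, hz'z], hz⟩

theorem mem_jacobson_iff_forall_isUnit_one_add_mul {x : R} :
    x ∈ Ring.jacobson R ↔ ∀ y, IsUnit (1 + y * x) := by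
  refine ⟨fun hx y ↦ isUnit_one_add_of_mem_jacobson (Ideal.mul_mem_left _ y hx), fun h ↦ ?_⟩
  rw [← Ideal.jacobson_bot, Ideal.mem_jacobson_iff]
  intro y
  obtain ⟨z, hz⟩ := (h y).exists_left_inv
  exact ⟨z, by rw [Submodule.mem_bot]; linear_combination (norm := noncomm_ring) hz⟩

theorem IsIdempotentElem.eq_zero_of_mem_jacobson {e : R} (he : IsIdempotentElem e)
    (h : e ∈ Ring.jacobson R) : e = 0 := by
  have hunit : IsUnit (1 - e) := by
    simpa [sub_eq_add_neg] using isUnit_one_add_of_mem_jacobson (neg_mem h)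
  exact hunit.mul_left_eq_zero.1 (by rw [mul_sub, mul_one, he.eq, sub_self])

theorem IsNilpotent.mem_jacobson_of_forall_commute {x : R} (hx : IsNilpotent x)
    (hc : ∀ y, Commute y x) : x ∈ Ring.jacobson R :=
  mem_jacobson_iff_forall_isUnit_one_add_mul.2 fun y ↦
    ((hc y).isNilpotent_mul_left hx).isUnit_one_add

theorem isLocalHom_mk_of_le_jacobson {I : Ideal R} [I.IsTwoSided] (hI : I ≤ Ring.jacobson R) :
    IsLocalHom (Ideal.Quotient.mk I) where
  map_nonunit a ha := by
    obtain ⟨b, hb⟩ := Ideal.Quotient.mk_surjective (ha.unit⁻¹ : (R ⧸ I)ˣ).val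
    have isUnit_of_mk_eq_one : ∀ c : R, Ideal.Quotient.mk I c = 1 → IsUnit c := fun c hc ↦ by
      simpa using isUnit_one_add_of_mem_jacobson
        (hI (Ideal.Quotient.eq.1 (hc.trans (map_one _).symm) : c - 1 ∈ I))
    rw [isUnit_iff_exists_and_exists]
    obtain ⟨c, hc⟩ := (isUnit_of_mk_eq_one (a * b) (by simp [hb])).exists_right_inv
    obtain ⟨d, hd⟩ := (isUnit_of_mk_eq_one (b * a) (by simp [hb])).exists_left_inv
    exact ⟨⟨b * c, by rw [← mul_assoc, hc]⟩, ⟨d * b, by rw [mul_assoc, hd]⟩⟩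

instance : IsLocalHom (Ideal.Quotient.mk (Ring.jacobson R)) := isLocalHom_mk_of_le_jacobson le_rfl

theorem neg_mem_delta (ha : a ∈ Delta R) : -a ∈ Delta R := fun u ↦ by
  have h := (ha (-u)).neg
  rwa [Units.val_neg, neg_add, neg_neg] at h

theorem add_mem_delta (ha : a ∈ Delta R) (hb : b ∈ Delta R) : a + b ∈ Delta R := fun u ↦ by
  rw [add_assoc, ← (hb u).unit_spec]
  exact ha _

theorem IsIdempotentElem.eq_zero_of_mem_delta (he : IsIdempotentElem a) (h : a ∈ Delta R) :
    a = 0 := by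
  have hunit : IsUnit (a - 1) := by simpa [sub_eq_add_neg] using h (-1)
  exact hunit.mul_left_eq_zero.1 (by rw [mul_sub, mul_one, he.eq, sub_self])

theorem mem_delta_of_mem_jacobson (ha : a ∈ Ring.jacobson R) : a ∈ Delta R := fun u ↦ by
  have h := u.isUnit.mul (isUnit_one_add_of_mem_jacobson (Ideal.mul_mem_left _ (↑u⁻¹ : R) ha))
  rwa [mul_add, mul_one, Units.mul_inv_cancel_left, add_comm] at h

theorem IsDeltaU.sub_one_mem (h : IsDeltaU R) (ha : IsUnit a) : a - 1 ∈ Delta R := by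
  obtain ⟨u, rfl⟩ := ha
  exact h u

theorem IsDeltaU.mem_delta_of_isNilpotent (h : IsDeltaU R) (ha : IsNilpotent a) :
    a ∈ Delta R := by
  simpa using h.sub_one_mem ha.isUnit_one_add

theorem exists_units_map_eq {M N F : Type*} [Monoid M] [Monoid N] [FunLike F M N] (f : F)
    [IsLocalHom f] (hf : Function.Surjective f) (u : Nˣ) : ∃ v : Mˣ, f v = u := by
  obtain ⟨a, ha⟩ := hf u
  exact ⟨(isUnit_of_map_unit f a (ha ▸ u.isUnit)).unit, ha⟩

theorem IsDeltaU.of_surjective {S : Type*} [Ring S] (f : R →+* S) [IsLocalHom f]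
    (hf : Function.Surjective f) (h : IsDeltaU R) : IsDeltaU S := by
  intro u v
  obtain ⟨u', hu⟩ := exists_units_map_eq f hf u
  obtain ⟨v', hv⟩ := exists_units_map_eq f hf v
  simpa [hu, hv] using (h u' v').map f

theorem isUU_quotient_jacobson (h : ∀ u : Rˣ, ∃ n : ℕ, ((u : R) - 1) ^ n ∈ Ring.jacobson R) :
    IsUU (R ⧸ Ring.jacobson R) := by
  intro u
  obtain ⟨v, hv⟩ := exists_units_map_eq _ Ideal.Quotient.mk_surjective u
  obtain ⟨n, hn⟩ := h v
  exact ⟨n, by simpa [hv] using Ideal.Quotient.eq_zero_iff_mem.2 hn⟩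

theorem IsSemipotent.quotient_jacobson (h : IsSemipotent R) :
    IsSemipotent (R ⧸ Ring.jacobson R) := by
  intro a ha
  obtain ⟨a, rfl⟩ := Ideal.Quotient.mk_surjective a
  have ha' : a ∉ Ring.jacobson R := fun h' ↦ ha <| by
    rw [Ring.jacobson_quotient_jacobson, Ideal.Quotient.eq_zero_iff_mem.2 h']
    exact zero_mem _
  obtain ⟨e, hne, he, r, rfl⟩ := h a ha'
  exact ⟨_, fun h0 ↦ hne (he.eq_zero_of_mem_jacobson (Ideal.Quotient.eq_zero_iff_mem.1 h0)),
    he.map _, _, map_mul _ _ _⟩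

theorem IsSemipotent.exists_of_ne_zero (h : IsSemipotent R) (hJ : Ring.jacobson R = ⊥)
    (ha : a ≠ 0) : ∃ e : R, e ≠ 0 ∧ IsIdempotentElem e ∧ ∃ r : R, e = a * r :=
  h a fun h' ↦ ha (by rwa [hJ, Ideal.mem_bot] at h')

theorem IsUU.two_eq_zero (h : IsUU R) (hJ : Ring.jacobson R = ⊥) : (2 : R) = 0 := by
  have h2 : IsNilpotent (2 : R) := by
    have h' := h (-1)
    rwa [Units.val_neg, Units.val_one, show (-1 - 1 : R) = -2 by norm_num,
      isNilpotent_neg_iff] at h'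
  have h2J := h2.mem_jacobson_of_forall_commute fun y ↦ Commute.ofNat_right y 2
  rwa [hJ, Ideal.mem_bot] at h2J

namespace IsMatrixUnitPair

theorem isIdempotentElem (h : IsMatrixUnitPair a b) : IsIdempotentElem (a * b + b * a) := by
  unfold IsIdempotentElem
  linear_combination (norm := noncomm_ring) h.mul_mul_left * b + a * h.mul_self_right * a +
    b * h.mul_self_left * b + h.mul_mul_right * a

theorem add_eq_zero_of_isDeltaU (h : IsMatrixUnitPair a b) (hR : IsDeltaU R) :
    a * b + b * a = 0 := by
  have hss : (a + b) * (a + b) = a * b + b * a := by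
    linear_combination (norm := noncomm_ring) h.mul_self_left + h.mul_self_right
  have hgs : (a * b + b * a) * (a + b) = a + b := by
    linear_combination (norm := noncomm_ring) h.mul_mul_left + a * h.mul_self_right +
      b * h.mul_self_left + h.mul_mul_right
  have hsg : (a + b) * (a * b + b * a) = a + b := by
    linear_combination (norm := noncomm_ring) h.mul_self_left * b + h.mul_mul_left +
      h.mul_mul_right + h.mul_self_right * a
  -- With `g = a b + b a` and `s = a + b`, `1 - g + s` is the swap matrix `[[0,1],[1,0]]` of the
  -- corner `g R g`, an involution.
  have hinv : (1 - (a * b + b * a) + (a + b)) * (1 - (a * b + b * a) + (a + b)) = 1 := by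
    linear_combination (norm := noncomm_ring) h.isIdempotentElem.eq - hgs - hsg + hss
  have hinv_mem : (1 - (a * b + b * a) + (a + b)) - 1 ∈ Delta R :=
    hR.sub_one_mem (isUnit_iff_exists.2 ⟨_, hinv, hinv⟩)
  have hnil : ∀ {x : R}, x * x = 0 → x ∈ Delta R := fun hx ↦
    hR.mem_delta_of_isNilpotent ⟨2, by rw [sq, hx]⟩
  refine h.isIdempotentElem.eq_zero_of_mem_delta ?_
  convert add_mem_delta (neg_mem_delta hinv_mem)
    (add_mem_delta (hnil h.mul_self_left) (hnil h.mul_self_right)) using 1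
  noncomm_ring

theorem add_eq_zero_of_isUU (h : IsMatrixUnitPair a b) (hR : IsUU R) (h2 : (2 : R) = 0) :
    a * b + b * a = 0 := by
  have hqq : (a + b + a * b) * (a + b + a * b) + (a + b + a * b) = a * b + b * a := by
    linear_combination (norm := noncomm_ring) h.mul_self_left + h.mul_self_left * b +
      h.mul_self_right + h.mul_mul_right + h.mul_mul_left + a * h.mul_self_right +
      h.mul_mul_left * b + h2 * (a * b + a + b)
  have hgq : (a * b + b * a) * (a + b + a * b) = a + b + a * b := by
    linear_combination (norm := noncomm_ring) h.mul_mul_left + a * h.mul_self_right +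
      h.mul_mul_left * b + b * h.mul_self_left + h.mul_mul_right + b * h.mul_self_left * b
  have hqg : (a + b + a * b) * (a * b + b * a) = a + b + a * b := by
    linear_combination (norm := noncomm_ring) h.mul_self_left * b + h.mul_mul_left +
      h.mul_mul_right + h.mul_self_right * a + h.mul_mul_left * b + a * h.mul_self_right * a
  -- `q = a + b + a b` is the matrix `[[1,1],[1,0]]` over `𝔽₂` in the corner `g R g`,
  -- `g = a b + b a`, and `1 + q` is a unit of order 3 with inverse `1 - g + q`.
  have hunit : IsUnit (1 + (a + b + a * b)) :=
    isUnit_iff_exists.2 ⟨1 - (a * b + b * a) + (a + b + a * b),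
      by linear_combination (norm := noncomm_ring) hqq - hqg,
      by linear_combination (norm := noncomm_ring) hqq - hgq⟩
  have hq : IsNilpotent (a + b + a * b) := by simpa using hR hunit.unit
  refine h.isIdempotentElem.eq_zero_of_isNilpotent ?_
  rw [← hqq, ← mul_add_one]
  exact ((Commute.refl _).add_right (Commute.one_right _)).isNilpotent_mul_right hq

end IsMatrixUnitPair

theorem IsSemipotent.exists_isMatrixUnitPair (hsp : IsSemipotent R) (hJ : Ring.jacobson R = ⊥)
    {z : R} (hz : z ≠ 0) (hz2 : z * z = 0) :
    ∃ a b : R, IsMatrixUnitPair a b ∧ a * b + b * a ≠ 0 := by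
  obtain ⟨e, hne, he, c, hzc⟩ := hsp.exists_of_ne_zero hJ hz
  -- `a = e z` lies in `e R (1 - e)`, and `b = (1 - e) c e` satisfies `a b = e`.
  have hze : z * e = 0 := by rw [hzc, ← mul_assoc, hz2, zero_mul]
  have hab : e * z * ((1 - e) * c * e) = e := by
    linear_combination (norm := noncomm_ring)
      -(e * hzc * e) + he.eq * e + he.eq - e * hze * (c * e)
  refine ⟨e * z, (1 - e) * c * e, ⟨?_, ?_, ?_, ?_⟩, fun h0 ↦ hne ?_⟩
  · linear_combination (norm := noncomm_ring) e * hze * z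
  · linear_combination (norm := noncomm_ring) -((1 - e) * c * he.eq * (c * e))
  · linear_combination (norm := noncomm_ring) hab * (e * z) + he.eq * z
  · linear_combination (norm := noncomm_ring) (1 - e) * c * e * hab + (1 - e) * c * he.eq
  · linear_combination (norm := noncomm_ring)
      e * h0 - e * hab - he.eq + he.eq * (c * e * (e * z))

namespace IsAbelianRing

theorem of_forall_mul_self_eq_zero (hred : ∀ z : R, z * z = 0 → z = 0) : IsAbelianRing R := by
  intro e he r
  have h1 : e * r * (1 - e) = 0 := hred _ <| by
    linear_combination (norm := noncomm_ring) -(e * r * he.eq * r * (1 - e))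
  have h2 : (1 - e) * r * e = 0 := hred _ <| by
    linear_combination (norm := noncomm_ring) -((1 - e) * r * he.eq * r * e)
  show e * r = r * e
  linear_combination (norm := noncomm_ring) h1 - h2

theorem mul_eq_of_mul_eq (hR : IsAbelianRing R) {e y c : R} (he : IsIdempotentElem e)
    (hy : e * y = y) (hc : e * c = c) (hyc : y * c = e) : c * y = e := by
  have hye : y * e = y := (hR e he y).eq.symm.trans hy
  -- `e - c y` is an idempotent, hence central, and it is killed by `y`.
  have hf : IsIdempotentElem (e - c * y) := by
    unfold IsIdempotentElem
    linear_combination (norm := noncomm_ring) he.eq - hc * y - c * hye + c * hyc * y + c * hy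
  have hyf : y * (e - c * y) = 0 := by
    linear_combination (norm := noncomm_ring) hye - hyc * y - hy
  have hf0 : e - c * y = 0 :=
    calc e - c * y = (e - c * y) * (y * c) := by
          linear_combination (norm := noncomm_ring) -(e - c * y) * hyc - he.eq + c * hye
      _ = y * (e - c * y) * c := by rw [← mul_assoc, (hR _ hf y).eq]
      _ = 0 := by rw [hyf, zero_mul]
  exact (sub_eq_zero.1 hf0).symm

theorem isUnit_add_one_sub (hR : IsAbelianRing R) {e y c : R} (he : IsIdempotentElem e)
    (hy : e * y = y) (hc : e * c = c) (hyc : y * c = e) : IsUnit (y + (1 - e)) := by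
  have hcy := hR.mul_eq_of_mul_eq he hy hc hyc
  have hye : y * e = y := (hR e he y).eq.symm.trans hy
  have hce : c * e = c := (hR e he c).eq.symm.trans hc
  exact isUnit_iff_exists.2 ⟨c + (1 - e),
    by linear_combination (norm := noncomm_ring) hyc - hye - hc + he.eq,
    by linear_combination (norm := noncomm_ring) hcy - hce - hy + he.eq⟩

end IsAbelianRing

theorem IsSemipotent.exists_corner_units (hsp : IsSemipotent R) (hJ : Ring.jacobson R = ⊥)
    (hab : IsAbelianRing R) {x : R} (hx : ¬IsIdempotentElem x) :
    ∃ e y : R, e ≠ 0 ∧ IsIdempotentElem e ∧ Commute e y ∧ IsUnit (y + (1 - e)) ∧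
      IsUnit (1 - y) := by
  obtain ⟨e, hne, he, s, hes⟩ := hsp.exists_of_ne_zero hJ (sub_ne_zero.2 (Ne.symm hx))
  have hxe : x * e = e * x := (hab e he x).eq.symm
  have hze : (x - x * x) * e = e * (x - x * x) := (hab e he _).eq.symm
  have hy : e * (e * x) = e * x := by rw [← mul_assoc, he.eq]
  have hey : e * (e - e * x) = e - e * x := by rw [mul_sub, hy, he.eq]
  -- `e x` and `e - e x` have right inverses in the corner `e R`: their product is `e (x - x²)`.
  have hinv : e * (x - x * x) * (e * s) = e := by
    linear_combination (norm := noncomm_ring)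
      e * hze * s + he.eq * ((x - x * x) * s) - e * hes + he.eq
  have h1 : e * x * (e - e * x) = e * (x - x * x) := by
    linear_combination (norm := noncomm_ring) e * hxe + he.eq * x - e * hxe * x - he.eq * (x * x)
  have h2 : (e - e * x) * (e * x) = e * (x - x * x) := by
    linear_combination (norm := noncomm_ring) he.eq * x - e * hxe * x - he.eq * (x * x)
  have hu := hab.isUnit_add_one_sub (c := (e - e * x) * (e * s)) he hy
    (by rw [← mul_assoc, hey]) (by rw [← mul_assoc, h1, hinv])
  have hv := hab.isUnit_add_one_sub (c := e * x * (e * s)) he hey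
    (by rw [← mul_assoc, hy]) (by rw [← mul_assoc, h2, hinv])
  exact ⟨e, e * x, hne, he, hab e he _, hu, by rwa [sub_add_sub_cancel'] at hv⟩

theorem IsSemipotent.forall_isIdempotentElem (hsp : IsSemipotent R) (hJ : Ring.jacobson R = ⊥)
    (hpair : ∀ a b : R, IsMatrixUnitPair a b → a * b + b * a = 0)
    (hcorner : ∀ e y : R, IsIdempotentElem e → Commute e y → IsUnit (y + (1 - e)) →
      IsUnit (1 - y) → e = 0)
    (x : R) : IsIdempotentElem x := by
  have hred : ∀ z : R, z * z = 0 → z = 0 := fun z hz ↦ by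
    by_contra hne
    obtain ⟨a, b, hab, hne'⟩ := hsp.exists_isMatrixUnitPair hJ hne hz
    exact hne' (hpair a b hab)
  by_contra hx
  obtain ⟨e, y, hne, he, hey, hu, hv⟩ :=
    hsp.exists_corner_units hJ (IsAbelianRing.of_forall_mul_self_eq_zero hred) hx
  exact hne (hcorner e y he hey hu hv)

theorem IsDeltaU.forall_isIdempotentElem (hR : IsDeltaU R) (hsp : IsSemipotent R)
    (hJ : Ring.jacobson R = ⊥) (x : R) : IsIdempotentElem x := by
  refine hsp.forall_isIdempotentElem hJ (fun _ _ h ↦ h.add_eq_zero_of_isDeltaU hR)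
    (fun e y he _ hu hv ↦ he.eq_zero_of_mem_delta ?_) x
  convert neg_mem_delta (add_mem_delta (hR.sub_one_mem hu) (hR.sub_one_mem hv)) using 1
  noncomm_ring

theorem IsUU.forall_isIdempotentElem (hR : IsUU R) (hsp : IsSemipotent R)
    (hJ : Ring.jacobson R = ⊥) (x : R) : IsIdempotentElem x := by
  refine hsp.forall_isIdempotentElem hJ
    (fun _ _ h ↦ h.add_eq_zero_of_isUU hR (hR.two_eq_zero hJ))
    (fun e y he hey hu hv ↦ he.eq_zero_of_isNilpotent ?_) x
  have hye : IsNilpotent (y - e) := by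
    convert hR hu.unit using 1
    simp only [IsUnit.unit_spec]
    abel
  have hy : IsNilpotent y := by simpa using hR hv.unit
  simpa using ((Commute.refl y).sub_right hey.symm).isNilpotent_sub hy hye

theorem sub_one_mem_of_sub_sq_mem {I : Ideal R} (u : Rˣ) (h : (u : R) - (u : R) ^ 2 ∈ I) :
    (u : R) - 1 ∈ I := by
  convert neg_mem (I.mul_mem_left (↑u⁻¹ : R) h) using 1
  rw [sq, mul_sub, Units.inv_mul_cancel_left, Units.inv_mul, neg_sub]

end

theorem deltaU_tfae_of_semipotent (R : Type*) [Ring R]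
    (hsp : ∀ a : R, a ∉ Ideal.jacobson (⊥ : Ideal R) →
      ∃ e : R, e ≠ 0 ∧ e * e = e ∧ ∃ r : R, e = a * r) :
    List.TFAE
      [IsDeltaU R,
       ∀ x : R, x - x ^ 2 ∈ Ideal.jacobson (⊥ : Ideal R),
       ∀ u : Rˣ, (u : R) - 1 ∈ Ideal.jacobson (⊥ : Ideal R),
       ∀ u : Rˣ, ∃ n : ℕ, 1 ≤ n ∧ ((u : R) - 1) ^ n ∈ Ideal.jacobson (⊥ : Ideal R)] := by
  simp only [Ideal.jacobson_bot] at hsp ⊢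
  have hspT := IsSemipotent.quotient_jacobson hsp
  have hJT := Ring.jacobson_quotient_jacobson R
  have of_boolean : (∀ y : R ⧸ Ring.jacobson R, IsIdempotentElem y) →
      ∀ x : R, x - x ^ 2 ∈ Ring.jacobson R := fun h x ↦
    Ideal.Quotient.eq_zero_iff_mem.1 (by rw [map_sub, map_pow, sq, (h _).eq, sub_self])
  tfae_have 1 → 2 := fun h ↦ of_boolean
    ((h.of_surjective _ Ideal.Quotient.mk_surjective).forall_isIdempotentElem hspT hJT)
  tfae_have 2 → 3 := fun h u ↦ sub_one_mem_of_sub_sq_mem u (h u)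
  tfae_have 3 → 1 := fun h u ↦ mem_delta_of_mem_jacobson (h u)
  tfae_have 3 → 4 := fun h u ↦ ⟨1, le_rfl, by rw [pow_one]; exact h u⟩
  tfae_have 4 → 2 := fun h ↦ of_boolean
    ((isUU_quotient_jacobson fun u ↦ (h u).imp fun _ hn ↦ hn.2).forall_isIdempotentElem hspT hJT)
  tfae_finish
end

section
/- A ring R is a ΔU ring if and only if the following three conditions hold: (i) 2 ∈ Δ(R); (ii) R is a 2-ΔU ring; (iii) for every x ∈ R, if x² ∈ Δ(R) then x ∈ Δ(R). -/
/-- A ring `R` is a 2-ΔU ring if every unit `u` satisfies `u ^ 2 - 1 ∈ Δ(R)`. -/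
def Is2DeltaU (R : Type*) [Ring R] : Prop := ∀ u : Rˣ, (u : R) ^ 2 - 1 ∈ Delta R

/-!
`Δ(R)` is an additive subgroup of `R` stable under left multiplication by units. Hence in a
ΔU ring `2 = -((-1) - 1)` and `u² - 1 = u (u - 1) + (u - 1)` lie in `Δ(R)`, and if `x² ∈ Δ(R)`
then `1 - x² = (1 + x)(1 - x)` is a unit, so the commuting factor `1 + x` is a unit and
`x = (1 + x) - 1 ∈ Δ(R)`. Conversely `(u - 1)² = (u² - 1) - 2u + 2 ∈ Δ(R)`, so `u - 1 ∈ Δ(R)`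
by the third condition.
-/

namespace Delta

variable {R : Type*} [Ring R] {r s : R}

lemma add_mem (hr : r ∈ Delta R) (hs : s ∈ Delta R) : r + s ∈ Delta R := by
  intro u
  obtain ⟨v, hv⟩ := hs u
  simpa only [add_assoc, ← hv] using hr v

lemma neg_mem (hr : r ∈ Delta R) : -r ∈ Delta R := by
  intro u
  simpa only [Units.val_neg, neg_add, neg_neg] using (hr (-u)).neg

lemma sub_mem (hr : r ∈ Delta R) (hs : s ∈ Delta R) : r - s ∈ Delta R := by
  simpa only [sub_eq_add_neg] using add_mem hr (neg_mem hs)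

lemma units_mul_mem (hr : r ∈ Delta R) (u : Rˣ) : (u : R) * r ∈ Delta R := by
  intro v
  simpa only [Units.val_mul, mul_add, Units.mul_inv_cancel_left] using u.isUnit.mul (hr (u⁻¹ * v))

lemma isUnit_one_sub (hr : r ∈ Delta R) : IsUnit (1 - r) := by
  simpa only [Units.val_one, neg_add_eq_sub] using neg_mem hr 1

end Delta

lemma isUnit_one_add_of_isUnit_one_sub_sq {R : Type*} [Ring R] {x : R} (h : IsUnit (1 - x ^ 2)) :
    IsUnit (1 + x) := by
  have hcomm : Commute (1 + x) (1 - x) :=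
    (Commute.one_left _).add_left ((Commute.one_right x).sub_right (Commute.refl x))
  rw [show 1 - x ^ 2 = (1 + x) * (1 - x) by noncomm_ring] at h
  exact (hcomm.isUnit_mul_iff.mp h).1

namespace IsDeltaU

variable {R : Type*} [Ring R]

lemma two_mem_delta (h : IsDeltaU R) : (2 : R) ∈ Delta R := by
  simpa only [Units.val_neg, Units.val_one, neg_sub, sub_neg_eq_add, one_add_one_eq_two]
    using Delta.neg_mem (h (-1))

lemma is2DeltaU (h : IsDeltaU R) : Is2DeltaU R := by
  intro u
  have hmem := Delta.add_mem (Delta.units_mul_mem (h u) u) (h u)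
  rwa [show (u : R) * (u - 1) + (u - 1) = u ^ 2 - 1 by noncomm_ring] at hmem

lemma mem_delta_of_sq_mem_delta (h : IsDeltaU R) {x : R} (hx : x ^ 2 ∈ Delta R) : x ∈ Delta R := by
  obtain ⟨v, hv⟩ := isUnit_one_add_of_isUnit_one_sub_sq (Delta.isUnit_one_sub hx)
  simpa only [hv, add_sub_cancel_left] using h v

lemma of_is2DeltaU (h2 : (2 : R) ∈ Delta R) (h : Is2DeltaU R)
    (hsq : ∀ x : R, x ^ 2 ∈ Delta R → x ∈ Delta R) : IsDeltaU R := by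
  intro u
  apply hsq
  have hmem := Delta.add_mem (Delta.sub_mem (h u) (Delta.units_mul_mem h2 u)) h2
  rwa [show (u : R) ^ 2 - 1 - u * 2 + 2 = (u - 1) ^ 2 by
    rw [sq, sq, mul_two, ← one_add_one_eq_two, mul_sub, sub_mul, mul_one, one_mul]; abel] at hmem

end IsDeltaU

theorem isDeltaU_iff_is2DeltaU (R : Type*) [Ring R] :
    IsDeltaU R ↔
      ((2 : R) ∈ Delta R ∧ Is2DeltaU R ∧ ∀ x : R, x ^ 2 ∈ Delta R → x ∈ Delta R) :=
  ⟨fun h => ⟨h.two_mem_delta, h.is2DeltaU, fun _ => h.mem_delta_of_sq_mem_delta⟩,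
    fun ⟨h2, h, hsq⟩ => IsDeltaU.of_is2DeltaU h2 h hsq⟩
end

section
/- Let R be a ring. Then R is a 2-ΔU ring if and only if the formal power series ring R[[x]] is a 2-ΔU ring. -/
/-!
A power series is a unit exactly when its constant term is, so `constantCoeff : R⟦X⟧ → R`
reflects units and pulls the 2-ΔU property back from `R` to `R⟦X⟧`. Conversely `R` is a
retract of `R⟦X⟧` via `C` and `constantCoeff`, and the 2-ΔU property passes to retracts.
-/

section

variable {R S : Type*} [Ring R] [Ring S]

theorem mem_delta_of_isLocalHom (f : S →+* R) [IsLocalHom f] {s : S} (hs : f s ∈ Delta R) :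
    s ∈ Delta S := fun u ↦
  (isUnit_map_iff f _).mp <| by simpa using hs (Units.map f u)

theorem Is2DeltaU.of_isLocalHom (f : S →+* R) [IsLocalHom f] (h : Is2DeltaU R) :
    Is2DeltaU S := fun u ↦
  mem_delta_of_isLocalHom f <| by simpa using h (Units.map f u)

theorem Is2DeltaU.of_leftInverse (f : R →+* S) (g : S →+* R) (hgf : Function.LeftInverse g f)
    (h : Is2DeltaU S) : Is2DeltaU R := fun u v ↦ by
  simpa [hgf _] using (h (Units.map f u) (Units.map f v)).map g

instance PowerSeries.isLocalHom_constantCoeff : IsLocalHom (PowerSeries.constantCoeff (R := R)) :=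
  ⟨fun _ ↦ PowerSeries.isUnit_iff_constantCoeff.mpr⟩

end

theorem is2DeltaU_iff_powerSeries (R : Type*) [Ring R] :
    Is2DeltaU R ↔ Is2DeltaU (PowerSeries R) :=
  ⟨Is2DeltaU.of_isLocalHom PowerSeries.constantCoeff,
    Is2DeltaU.of_leftInverse PowerSeries.C PowerSeries.constantCoeff PowerSeries.constantCoeff_C⟩
end
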